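/- There exists a constant c > 0 such that for every integer n ≥ 2 the following holds. Let (P,d) be the comb metric on 2n points with parameter M = n. If μ is an oblivious (1/3)-reliable 2-spanner for (P,d), then some graph G in the support of μ has at least c·n·log₂ n edges. -/

import Mathlib

open scoped ENNReal

/-- The total length of a walk with respect to an edge-length function. -/
noncomputable def walkLen {V : Type*} {G : SimpleGraph V} {x y : V}
    (len : V → V → ℝ≥0∞) (p : G.Walk x y) : ℝ≥0∞ :=
  (p.darts.map (fun d => len d.toProd.1 d.toProd.2)).sum

/-- Walk-distance in a graph with edge lengths: the infimum over walks of the total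
length (`∞` if no walk exists). -/
noncomputable def gdist {V : Type*} (G : SimpleGraph V) (len : V → V → ℝ≥0∞)
    (x y : V) : ℝ≥0∞ :=
  ⨅ p : G.Walk x y, walkLen len p

/-- The comb metric on `2n` points with parameter `M = n`: path points `inl i`
at mutual distances `|i−j|`, each with a pendant leaf `inr i` attached by an
edge of weight `n`. -/
def combD (n : ℕ) : (Fin n ⊕ Fin n) → (Fin n ⊕ Fin n) → ℝ
  | Sum.inl i, Sum.inl j => |(i.val : ℝ) - (j.val : ℝ)|
  | Sum.inl i, Sum.inr j => n + |(i.val : ℝ) - (j.val : ℝ)|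
  | Sum.inr i, Sum.inl j => n + |(i.val : ℝ) - (j.val : ℝ)|
  | Sum.inr i, Sum.inr j => if i = j then 0 else 2 * n + |(i.val : ℝ) - (j.val : ℝ)|

/-- `μ` is a finitely supported probability distribution over simple graphs on `P`
that is an oblivious `ν`-reliable `2`-spanner for `(P,d)`: for every attack set
`B ⊆ P` there is an assignment `G ↦ B⁺(G) ⊇ B` whose expected size is at most
`(1+ν)·|B|`, such that for every graph `G` in the support, the graph `G∖B`
(induced on `Bᶜ`, edges having length `d`) is a `2`-spanner for all points
outside `B⁺(G)`. -/
def IsObliviousReliableTwoSpanner {P : Type*} [Fintype P] (d : P → P → ℝ) (ν : ℝ)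
    (μ : SimpleGraph P → ℝ) : Prop :=
  (∀ G, 0 ≤ μ G) ∧ (Set.Finite {G | μ G ≠ 0}) ∧ (∑ᶠ G, μ G) = 1 ∧
  ∀ B : Set P, ∃ Bp : SimpleGraph P → Set P,
    (∀ G, B ⊆ Bp G) ∧
    (∑ᶠ G, μ G * ((Bp G).ncard : ℝ)) ≤ (1 + ν) * (B.ncard : ℝ) ∧
    (∀ G, μ G ≠ 0 → ∀ x y : ↥(Bᶜ), x.1 ∉ Bp G → y.1 ∉ Bp G →
      gdist (G.induce Bᶜ) (fun a b => ENNReal.ofReal (d a.1 b.1)) x y ≤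
        ENNReal.ofReal (2 * d x.1 y.1))

lemma swap_count {α β : Type*} (A : Finset α) (B : Finset β) (Q : α → β → Prop)
    [∀ i x, Decidable (Q i x)] :
    ∑ i ∈ A, (B.filter (Q i)).card = ∑ x ∈ B, (A.filter (fun i => Q i x)).card := by
  simp only [Finset.card_filter]
  rw [Finset.sum_comm]

lemma core_scale (n t : ℕ) (L : ℕ → ℕ → Prop) [DecidableRel L]
    (hL : ∀ a b, L a b → a < n ∧ b < n ∧ a ≠ b)
    (hLs : ∀ a b, L a b → L b a)
    (Sv : Finset ℕ) (hSn : Sv ⊆ Finset.range n) (hS : 2 * n ≤ 3 * Sv.card)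
    (hcon : ∀ i ∈ Sv, ∀ j ∈ Sv, i < j →
      L i j ∨ ∃ a, L i a ∧ L a j ∧ Nat.dist i a + Nat.dist a j ≤ 2 * (j - i))
    (htpos : 0 < t) (ht : 18 * t ≤ n) :
    n ≤ 144 * ((Finset.range n ×ˢ Finset.range n).filter
        (fun e => (e.1 < e.2 ∧ L e.1 e.2) ∧ (t ≤ 2 * (e.2 - e.1) ∧ e.2 - e.1 < 4 * t))).card := by
  classical
  set m := Sv.card with hm
  have hmn : m ≤ n := by simpa using Finset.card_le_card hSn
  set Bad : Finset ℕ := Finset.range n \ Sv with hBad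
  have hBadcard : Bad.card = n - m := by
    rw [hBad, Finset.card_sdiff_of_subset hSn, Finset.card_range]
  set miss : ℕ → ℕ := fun i => ((Finset.Ico (i + t) (i + 2 * t)).filter (fun x => x ∉ Sv)).card
    with hmiss
  set Cand : Finset ℕ := Finset.range (n + 1 - 2 * t) with hCand
  -- sum of missing over candidates
  have hsum : ∑ i ∈ Cand, miss i ≤ (n - m) * t := by
    have h1 : ∀ i ∈ Cand, miss i = (Bad.filter (fun x => i + t ≤ x ∧ x < i + 2 * t)).card := by
      intro i hi
      rw [hCand, Finset.mem_range] at hi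
      show ((Finset.Ico (i + t) (i + 2 * t)).filter (fun x => x ∉ Sv)).card = _
      congr 1
      apply Finset.ext
      intro x
      simp only [Finset.mem_filter, Finset.mem_Ico, hBad, Finset.mem_sdiff, Finset.mem_range]
      constructor
      · rintro ⟨⟨h2, h3⟩, h4⟩; exact ⟨⟨by omega, h4⟩, h2, h3⟩
      · rintro ⟨⟨h2, h4⟩, h3, h5⟩; exact ⟨⟨h3, h5⟩, h4⟩
    rw [Finset.sum_congr rfl h1, swap_count]
    refine le_trans (Finset.sum_le_sum ?_) (by rw [Finset.sum_const, hBadcard, smul_eq_mul])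
    intro x hx
    have hsub : Cand.filter (fun i => i + t ≤ x ∧ x < i + 2 * t) ⊆
        Finset.Ico (x + 1 - 2 * t) (x + 1 - t) := by
      intro i hi
      simp only [Finset.mem_filter, Finset.mem_Ico] at hi ⊢
      omega
    calc _ ≤ (Finset.Ico (x + 1 - 2 * t) (x + 1 - t)).card := Finset.card_le_card hsub
      _ ≤ t := by rw [Nat.card_Ico]; omega
  -- poor set
  set Poor : Finset ℕ := Cand.filter (fun i => 3 * t < 4 * miss i) with hPoor
  have hPoorcard : 9 * Poor.card ≤ 4 * n := by
    have h1 : ∀ i ∈ Poor, 3 * t + 1 ≤ 4 * miss i := by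
      intro i hi
      rw [hPoor, Finset.mem_filter] at hi
      omega
    have h2 : Poor.card * (3 * t + 1) ≤ ∑ i ∈ Poor, 4 * miss i := by
      simpa using Finset.card_nsmul_le_sum Poor _ _ h1
    have h3 : ∑ i ∈ Poor, 4 * miss i ≤ 4 * ((n - m) * t) := by
      rw [← Finset.mul_sum]
      have hsub : Poor ⊆ Cand := by
        rw [hPoor]; exact Finset.filter_subset _ _
      have := Finset.sum_le_sum_of_subset (f := miss) hsub
      omega
    have h4 : t * (3 * Poor.card) ≤ t * (4 * (n - m)) := by nlinarith
    have h5 : 3 * Poor.card ≤ 4 * (n - m) := Nat.le_of_mul_le_mul_left h4 htpos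
    omega
  -- rich set
  set Good1 : Finset ℕ := Sv.filter (fun i => i + 2 * t ≤ n) with hGood1
  have hGood1card : m ≤ Good1.card + 2 * t := by
    have hsub : Sv.filter (fun i => ¬ (i + 2 * t ≤ n)) ⊆ Finset.Ico (n + 1 - 2 * t) n := by
      intro i hi
      rw [Finset.mem_filter] at hi
      have := hSn hi.1
      rw [Finset.mem_range] at this
      rw [Finset.mem_Ico]
      omega
    have h1 := Finset.card_le_card hsub
    rw [Nat.card_Ico] at h1
    have h2 : Good1.card + (Sv.filter (fun i => ¬ (i + 2 * t ≤ n))).card = Sv.card := by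
      rw [hGood1]
      exact Finset.card_filter_add_card_filter_not (fun i => i + 2 * t ≤ n)
    omega
  set R : Finset ℕ := Good1 \ Poor with hR
  have hRcard : n ≤ 9 * R.card := by
    have h1 : Good1.card - Poor.card ≤ R.card := Finset.le_card_sdiff _ _
    omega
  -- partners
  have hpart : ∀ i ∈ R, t ≤ 4 * (Sv.filter (fun j => i + t ≤ j ∧ j < i + 2 * t)).card := by
    intro i hi
    rw [hR, Finset.mem_sdiff, hGood1, Finset.mem_filter] at hi
    obtain ⟨⟨hiS, hi2t⟩, hiP⟩ := hi
    have hiC : i ∈ Cand := by rw [hCand, Finset.mem_range]; omega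
    have hmiss_le : 4 * miss i ≤ 3 * t := by
      by_contra hcon'
      exact hiP (by rw [hPoor, Finset.mem_filter]; exact ⟨hiC, by omega⟩)
    have heq : Sv.filter (fun j => i + t ≤ j ∧ j < i + 2 * t) =
        (Finset.Ico (i + t) (i + 2 * t)).filter (fun x => x ∈ Sv) := by
      apply Finset.ext
      intro x
      simp only [Finset.mem_filter, Finset.mem_Ico]
      tauto
    have h2 : ((Finset.Ico (i + t) (i + 2 * t)).filter (fun x => x ∈ Sv)).card
        + ((Finset.Ico (i + t) (i + 2 * t)).filter (fun x => ¬ (x ∈ Sv))).card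
        = (Finset.Ico (i + t) (i + 2 * t)).card :=
      Finset.card_filter_add_card_filter_not (fun x => x ∈ Sv)
    rw [Nat.card_Ico] at h2
    have h3 : miss i = ((Finset.Ico (i + t) (i + 2 * t)).filter (fun x => ¬ x ∈ Sv)).card := rfl
    rw [heq]
    omega
  -- pair set
  set Q : Finset (ℕ × ℕ) := (Sv ×ˢ Sv).filter (fun p => p.1 + t ≤ p.2 ∧ p.2 < p.1 + 2 * t)
    with hQ
  have hQcard : Q.card = ∑ i ∈ Sv, (Sv.filter (fun j => i + t ≤ j ∧ j < i + 2 * t)).card := by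
    rw [hQ, Finset.card_filter, Finset.sum_product]
    apply Finset.sum_congr rfl
    intro i _
    rw [Finset.card_filter]
  have hQlow : n * t ≤ 36 * Q.card := by
    have hRsub : R ⊆ Sv := by
      intro i hi
      rw [hR, Finset.mem_sdiff, hGood1, Finset.mem_filter] at hi
      exact hi.1.1
    have h1 : R.card * t ≤ ∑ i ∈ R, 4 * (Sv.filter (fun j => i + t ≤ j ∧ j < i + 2 * t)).card := by
      simpa using Finset.card_nsmul_le_sum R _ _ hpart
    have h2 : ∑ i ∈ R, 4 * (Sv.filter (fun j => i + t ≤ j ∧ j < i + 2 * t)).card ≤ 4 * Q.card := by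
      rw [hQcard, ← Finset.mul_sum]
      have := Finset.sum_le_sum_of_subset
        (f := fun i => (Sv.filter (fun j => i + t ≤ j ∧ j < i + 2 * t)).card) hRsub
      exact Nat.mul_le_mul_left 4 (by simpa using this)
    nlinarith
  -- edge set
  set Ek : Finset (ℕ × ℕ) := (Finset.range n ×ˢ Finset.range n).filter
      (fun e => (e.1 < e.2 ∧ L e.1 e.2) ∧ (t ≤ 2 * (e.2 - e.1) ∧ e.2 - e.1 < 4 * t)) with hEk
  have hedge : ∀ u v, L u v → ((min u v, max u v) ∈ Ek ↔
      (t ≤ 2 * Nat.dist u v ∧ Nat.dist u v < 4 * t)) := by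
    intro u v huv
    obtain ⟨hu, hv, hne⟩ := hL u v huv
    have hdist : Nat.dist u v = max u v - min u v := by
      simp only [Nat.dist]; omega
    have hLmm : L (min u v) (max u v) := by
      rcases Nat.le_total u v with h | h
      · rw [min_eq_left h, max_eq_right h]; exact huv
      · rw [min_eq_right h, max_eq_left h]; exact hLs u v huv
    rw [hEk, Finset.mem_filter, Finset.mem_product]
    constructor
    · rintro ⟨-, -, h1, h2⟩; omega
    · rintro ⟨h1, h2⟩
      refine ⟨⟨?_, ?_⟩, ⟨?_, hLmm⟩, ?_, ?_⟩
      · rw [Finset.mem_range]; show min u v < n; omega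
      · rw [Finset.mem_range]; show max u v < n; omega
      · show min u v < max u v; omega
      · show t ≤ 2 * (max u v - min u v); omega
      · show max u v - min u v < 4 * t; omega
  have hmap : ∀ p ∈ Q, ∃ e, e ∈ Ek ∧
      (p.1 = e.1 ∨ p.1 = e.2 ∨ p.2 = e.1 ∨ p.2 = e.2) := by
    rintro ⟨i, j⟩ hp
    simp only [hQ, Finset.mem_filter, Finset.mem_product] at hp
    obtain ⟨⟨hiS, hjS⟩, hij1, hij2⟩ := hp
    have hij : i < j := by omega
    rcases hcon i hiS j hjS hij with hd | ⟨a, h1, h2, h3⟩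
    · obtain ⟨hne1, hne2, hne3⟩ := hL i j hd
      have hmm : min i j = i ∧ max i j = j := ⟨min_eq_left hij.le, max_eq_right hij.le⟩
      have hdij : Nat.dist i j = j - i := Nat.dist_eq_sub_of_le hij.le
      refine ⟨(i, j), ?_, by left; rfl⟩
      have := (hedge i j hd).mpr (by omega)
      rwa [hmm.1, hmm.2] at this
    · have hdij : Nat.dist i j = j - i := Nat.dist_eq_sub_of_le hij.le
      have htri : j - i ≤ Nat.dist i a + Nat.dist a j := by
        rw [← hdij]; exact Nat.dist.triangle_inequality i a j
      rcases Nat.le_total (Nat.dist a j) (Nat.dist i a) with hc | hc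
      · refine ⟨(min i a, max i a), (hedge i a h1).mpr (by omega), ?_⟩
        rcases Nat.le_total i a with h | h
        · exact Or.inl (min_eq_left h).symm
        · exact Or.inr (Or.inl (max_eq_left h).symm)
      · refine ⟨(min a j, max a j), (hedge a j h2).mpr (by omega), ?_⟩
        rcases Nat.le_total a j with h | h
        · exact Or.inr (Or.inr (Or.inr (max_eq_right h).symm))
        · exact Or.inr (Or.inr (Or.inl (min_eq_right h).symm))
  -- skolemize and count fibers
  choose! f hf1 hf2 using hmap
  have himg : Q.image f ⊆ Ek := by
    intro e he
    rw [Finset.mem_image] at he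
    obtain ⟨p, hp, rfl⟩ := he
    exact hf1 p hp
  have hA : ∀ u, (Q.filter (fun p => p.1 = u)).card ≤ t := by
    intro u
    have := Finset.card_le_card_of_injOn (f := fun p : ℕ × ℕ => p.2)
      (s := Q.filter (fun p => p.1 = u)) (t := Finset.Ico (u + t) (u + 2 * t)) ?_ ?_
    · rw [Nat.card_Ico] at this; omega
    · rintro ⟨i, j⟩ hp
      simp only [hQ, Finset.mem_coe, Finset.mem_filter, Finset.mem_product] at hp
      rw [Finset.mem_coe, Finset.mem_Ico]
      obtain ⟨⟨-, h1, h2⟩, h4⟩ := hp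
      dsimp only
      omega
    · rintro ⟨i, j⟩ hp ⟨i', j'⟩ hp' hj
      simp only [Finset.coe_filter, Set.mem_setOf_eq] at hp hp'
      have : i = u := hp.2
      have : i' = u := hp'.2
      simp_all
  have hB : ∀ u, (Q.filter (fun p => p.2 = u)).card ≤ t := by
    intro u
    have := Finset.card_le_card_of_injOn (f := fun p : ℕ × ℕ => p.1)
      (s := Q.filter (fun p => p.2 = u)) (t := Finset.Ico (u + 1 - 2 * t) (u + 1 - t)) ?_ ?_
    · rw [Nat.card_Ico] at this; omega
    · rintro ⟨i, j⟩ hp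
      simp only [hQ, Finset.mem_coe, Finset.mem_filter, Finset.mem_product] at hp
      rw [Finset.mem_coe, Finset.mem_Ico]
      obtain ⟨⟨-, h1, h2⟩, h4⟩ := hp
      dsimp only
      omega
    · rintro ⟨i, j⟩ hp ⟨i', j'⟩ hp' hj
      simp only [Finset.coe_filter, Set.mem_setOf_eq] at hp hp'
      have : j = u := hp.2
      have : j' = u := hp'.2
      simp_all
  have hfib : ∀ e ∈ Q.image f, (Q.filter (fun p => f p = e)).card ≤ 4 * t := by
    intro e _
    have hsub : Q.filter (fun p => f p = e) ⊆
        (Q.filter (fun p => p.1 = e.1)) ∪ (Q.filter (fun p => p.1 = e.2))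
        ∪ (Q.filter (fun p => p.2 = e.1)) ∪ (Q.filter (fun p => p.2 = e.2)) := by
      intro p hp
      rw [Finset.mem_filter] at hp
      obtain ⟨hpQ, hfe⟩ := hp
      have := hf2 p hpQ
      rw [hfe] at this
      simp only [Finset.mem_union, Finset.mem_filter]
      tauto
    have hu := Finset.card_le_card hsub
    have c1 := Finset.card_union_le ((Q.filter (fun p => p.1 = e.1)) ∪ (Q.filter (fun p => p.1 = e.2)) ∪ (Q.filter (fun p => p.2 = e.1))) (Q.filter (fun p => p.2 = e.2))
    have c2 := Finset.card_union_le ((Q.filter (fun p => p.1 = e.1)) ∪ (Q.filter (fun p => p.1 = e.2))) (Q.filter (fun p => p.2 = e.1))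
    have c3 := Finset.card_union_le (Q.filter (fun p => p.1 = e.1)) (Q.filter (fun p => p.1 = e.2))
    have := hA e.1
    have := hA e.2
    have := hB e.1
    have := hB e.2
    omega
  have hQE : Q.card ≤ 4 * t * Ek.card := by
    calc Q.card ≤ 4 * t * (Q.image f).card := Finset.card_le_mul_card_image Q (4 * t) hfib
      _ ≤ 4 * t * Ek.card := Nat.mul_le_mul_left _ (Finset.card_le_card himg)
  have hfinal : t * n ≤ t * (144 * Ek.card) := by nlinarith
  exact Nat.le_of_mul_le_mul_left hfinal htpos

lemma scales_sum (n K : ℕ) (L : ℕ → ℕ → Prop) [DecidableRel L]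
    (h : ∀ k, k < K → n ≤ 144 * ((Finset.range n ×ˢ Finset.range n).filter
      (fun e => (e.1 < e.2 ∧ L e.1 e.2) ∧
        (2 ^ k ≤ 2 * (e.2 - e.1) ∧ e.2 - e.1 < 4 * 2 ^ k))).card) :
    K * n ≤ 432 * ((Finset.range n ×ˢ Finset.range n).filter
      (fun e => e.1 < e.2 ∧ L e.1 e.2)).card := by
  classical
  set Pe : Finset (ℕ × ℕ) := (Finset.range n ×ˢ Finset.range n).filter
    (fun e => e.1 < e.2 ∧ L e.1 e.2) with hPe
  have hflt : ∀ k, (Finset.range n ×ˢ Finset.range n).filter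
      (fun e => (e.1 < e.2 ∧ L e.1 e.2) ∧
        (2 ^ k ≤ 2 * (e.2 - e.1) ∧ e.2 - e.1 < 4 * 2 ^ k)) =
      Pe.filter (fun e => 2 ^ k ≤ 2 * (e.2 - e.1) ∧ e.2 - e.1 < 4 * 2 ^ k) := by
    intro k
    rw [hPe, Finset.filter_filter]
  have hswap : ∑ k ∈ Finset.range K,
      (Pe.filter (fun e => 2 ^ k ≤ 2 * (e.2 - e.1) ∧ e.2 - e.1 < 4 * 2 ^ k)).card
      = ∑ e ∈ Pe, ((Finset.range K).filter
          (fun k => 2 ^ k ≤ 2 * (e.2 - e.1) ∧ e.2 - e.1 < 4 * 2 ^ k)).card :=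
    swap_count _ _ _
  have hfib : ∀ e ∈ Pe, ((Finset.range K).filter
      (fun k => 2 ^ k ≤ 2 * (e.2 - e.1) ∧ e.2 - e.1 < 4 * 2 ^ k)).card ≤ 3 := by
    intro e he
    rw [hPe, Finset.mem_filter] at he
    set s := e.2 - e.1 with hs
    have hs1 : 1 ≤ s := by omega
    have hsub : ((Finset.range K).filter
        (fun k => 2 ^ k ≤ 2 * s ∧ s < 4 * 2 ^ k)) ⊆
        Finset.Icc (Nat.log 2 s - 1) (Nat.log 2 s + 1) := by
      intro k hk
      rw [Finset.mem_filter, Finset.mem_range] at hk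
      obtain ⟨-, h1, h2⟩ := hk
      have hub : k ≤ Nat.log 2 s + 1 := by
        have h3 : 2 ^ k ≤ s * 2 := by omega
        have := (Nat.le_log_iff_pow_le (by norm_num) (by omega)).mpr h3
        rwa [Nat.log_mul_base (by norm_num) (by omega)] at this
      have hlb : Nat.log 2 s ≤ k + 1 := by
        have h3 : s < 2 ^ (k + 2) := by
          have : (4 : ℕ) * 2 ^ k = 2 ^ (k + 2) := by ring
          omega
        have := (Nat.log_lt_iff_lt_pow (by norm_num) (by omega)).mpr h3
        omega
      rw [Finset.mem_Icc]
      omega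
    calc _ ≤ (Finset.Icc (Nat.log 2 s - 1) (Nat.log 2 s + 1)).card :=
          Finset.card_le_card hsub
      _ ≤ 3 := by rw [Nat.card_Icc]; omega
  calc K * n = ∑ _k ∈ Finset.range K, n := by
        rw [Finset.sum_const, Finset.card_range, smul_eq_mul]
    _ ≤ ∑ k ∈ Finset.range K, 144 * (Pe.filter
          (fun e => 2 ^ k ≤ 2 * (e.2 - e.1) ∧ e.2 - e.1 < 4 * 2 ^ k)).card := by
        apply Finset.sum_le_sum
        intro k hk
        rw [Finset.mem_range] at hk
        have := h k hk
        rwa [hflt k] at this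
    _ = 144 * ∑ k ∈ Finset.range K, (Pe.filter
          (fun e => 2 ^ k ≤ 2 * (e.2 - e.1) ∧ e.2 - e.1 < 4 * 2 ^ k)).card := by
        rw [Finset.mul_sum]
    _ ≤ 144 * (3 * Pe.card) := by
        apply Nat.mul_le_mul_left
        rw [hswap]
        calc _ ≤ ∑ _e ∈ Pe, 3 := Finset.sum_le_sum hfib
          _ = 3 * Pe.card := by rw [Finset.sum_const, smul_eq_mul, Nat.mul_comm]
    _ = 432 * Pe.card := by ring

lemma natdist_real (a b : ℕ) : |(a : ℝ) - (b : ℝ)| = (Nat.dist a b : ℝ) := by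
  rcases Nat.le_total a b with h | h
  · rw [Nat.dist_eq_sub_of_le h, abs_sub_comm,
      abs_of_nonneg (sub_nonneg.mpr ((Nat.cast_le (α := ℝ)).mpr h))]
    push_cast [h]
    ring
  · rw [Nat.dist_comm, Nat.dist_eq_sub_of_le h,
      abs_of_nonneg (sub_nonneg.mpr ((Nat.cast_le (α := ℝ)).mpr h))]
    push_cast [h]
    ring

lemma combD_inr_inr {n : ℕ} {i j : Fin n} (hij : i ≠ j) :
    combD n (Sum.inr i) (Sum.inr j) = 2 * n + (Nat.dist i.val j.val : ℝ) := by
  simp only [combD, if_neg hij, natdist_real]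

lemma walkLen_cons {V : Type*} {G : SimpleGraph V} {u v w : V}
    (len : V → V → ℝ≥0∞) (h : G.Adj u v) (p : G.Walk v w) :
    walkLen len (SimpleGraph.Walk.cons h p) = len u v + walkLen len p := by
  simp [walkLen, SimpleGraph.Walk.darts_cons]

lemma walkLen_nil {V : Type*} {G : SimpleGraph V} {u : V} (len : V → V → ℝ≥0∞) :
    walkLen len (SimpleGraph.Walk.nil : G.Walk u u) = 0 := by
  simp [walkLen]

lemma inr_mem_Bc {n : ℕ} (a : Fin n) :
    (Sum.inr a : Fin n ⊕ Fin n) ∈ (Set.range (Sum.inl : Fin n → Fin n ⊕ Fin n))ᶜ := by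
  simp

lemma walk_structure {n : ℕ} (hn : 2 ≤ n) (G : SimpleGraph (Fin n ⊕ Fin n))
    (i j : Fin n) (hij : i ≠ j)
    (hgd : gdist (G.induce (Set.range (Sum.inl : Fin n → Fin n ⊕ Fin n))ᶜ)
        (fun a b => ENNReal.ofReal (combD n a.1 b.1))
        ⟨Sum.inr i, inr_mem_Bc i⟩ ⟨Sum.inr j, inr_mem_Bc j⟩ ≤
      ENNReal.ofReal (2 * combD n (Sum.inr i) (Sum.inr j))) :
    G.Adj (Sum.inr i) (Sum.inr j) ∨ ∃ a : Fin n, G.Adj (Sum.inr i) (Sum.inr a) ∧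
      G.Adj (Sum.inr a) (Sum.inr j) ∧
      Nat.dist i.val a.val + Nat.dist a.val j.val ≤ 2 * Nat.dist i.val j.val := by
  classical
  set Bc := (Set.range (Sum.inl : Fin n → Fin n ⊕ Fin n))ᶜ with hBc
  set len : ↥Bc → ↥Bc → ℝ≥0∞ := fun a b => ENNReal.ofReal (combD n a.1 b.1) with hlen
  set D := Nat.dist i.val j.val with hD
  have hDn : D ≤ n - 1 := by
    have h1 : i.val < n := i.isLt
    have h2 : j.val < n := j.isLt
    simp only [hD, Nat.dist]; omega
  -- get a walk of small length
  have hlt : gdist (G.induce Bc) len ⟨Sum.inr i, inr_mem_Bc i⟩ ⟨Sum.inr j, inr_mem_Bc j⟩ <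
      ENNReal.ofReal (4 * n + 2 * D + 1) := by
    refine lt_of_le_of_lt hgd ?_
    rw [combD_inr_inr hij]
    rw [ENNReal.ofReal_lt_ofReal_iff (by positivity)]
    push_cast
    linarith
  rw [gdist, iInf_lt_iff] at hlt
  obtain ⟨p, hp⟩ := hlt
  -- a helper: each element of Bc is inr
  have hinr : ∀ z : ↥Bc, ∃ a : Fin n, z.1 = Sum.inr a := by
    rintro ⟨z, hz⟩
    cases z with
    | inl a => exact absurd (Set.mem_range_self a) hz
    | inr a => exact ⟨a, rfl⟩
  -- adjacency in induced graph
  have hadj : ∀ {u v : ↥Bc}, (G.induce Bc).Adj u v → G.Adj u.1 v.1 := by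
    intro u v h
    exact h
  have hlen2 : ∀ (u v : ↥Bc) (a b : Fin n), u.1 = Sum.inr a → v.1 = Sum.inr b → a ≠ b →
      len u v = ENNReal.ofReal (2 * n + (Nat.dist a.val b.val : ℝ)) := by
    intro u v a b hu hv hab
    rw [hlen]
    simp only [hu, hv]
    rw [combD_inr_inr hab]
  have hlb : ∀ (u v : ↥Bc), (G.induce Bc).Adj u v → ENNReal.ofReal (2 * n) ≤ len u v := by
    intro u v h
    obtain ⟨a, ha⟩ := hinr u
    obtain ⟨b, hb⟩ := hinr v
    have hne : a ≠ b := by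
      intro e
      exact h.ne (Subtype.ext (by rw [ha, hb, e]))
    rw [hlen2 u v a b ha hb hne]
    apply ENNReal.ofReal_le_ofReal
    have : (0 : ℝ) ≤ (Nat.dist a.val b.val : ℝ) := Nat.cast_nonneg _
    linarith
  have key : ∀ (x y : ↥Bc) (p : (G.induce Bc).Walk x y),
      walkLen len p < ENNReal.ofReal (4 * n + 2 * D + 1) →
      x.1 = Sum.inr i → y.1 = Sum.inr j →
      (G.Adj (Sum.inr i) (Sum.inr j) ∨ ∃ a : Fin n, G.Adj (Sum.inr i) (Sum.inr a) ∧
        G.Adj (Sum.inr a) (Sum.inr j) ∧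
        Nat.dist i.val a.val + Nat.dist a.val j.val ≤ 2 * Nat.dist i.val j.val) := by
    intro x y p
    cases p with
    | nil =>
      intro _ hx hy
      rw [hx] at hy
      exact absurd (Sum.inr_injective hy) hij
    | cons h q =>
      rename_i w
      cases q with
      | nil =>
        intro _ hx hy
        left
        have := hadj h
        rwa [hx, hy] at this
      | cons h' r =>
        rename_i z
        cases r with
        | nil =>
          intro hplen hx hy
          right
          obtain ⟨a, ha⟩ := hinr w
          have hia : i ≠ a := by
            intro e
            exact h.ne (Subtype.ext (by rw [hx, ha, e]))
          have haj : a ≠ j := by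
            intro e
            exact h'.ne (Subtype.ext (by rw [ha, hy, e]))
          refine ⟨a, ?_, ?_, ?_⟩
          · have := hadj h; rwa [hx, ha] at this
          · have := hadj h'; rwa [ha, hy] at this
          · rw [walkLen_cons, walkLen_cons, walkLen_nil, add_zero] at hplen
            rw [hlen2 x w i a hx ha hia, hlen2 w y a j ha hy haj,
              ← ENNReal.ofReal_add (by positivity) (by positivity)] at hplen
            rw [ENNReal.ofReal_lt_ofReal_iff_of_nonneg (by positivity)] at hplen
            have hcast : (Nat.dist i.val a.val : ℝ) + (Nat.dist a.val j.val : ℝ) <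
                2 * (D : ℝ) + 1 := by linarith
            have : Nat.dist i.val a.val + Nat.dist a.val j.val < 2 * D + 1 := by
              exact_mod_cast hcast
            omega
        | cons h'' r' =>
          intro hplen hx hy
          exfalso
          rw [walkLen_cons, walkLen_cons, walkLen_cons] at hplen
          have hge : ENNReal.ofReal (2 * n) + (ENNReal.ofReal (2 * n) +
              ENNReal.ofReal (2 * n)) ≤ walkLen len (SimpleGraph.Walk.cons h
                (SimpleGraph.Walk.cons h' (SimpleGraph.Walk.cons h'' r'))) := by
            rw [walkLen_cons, walkLen_cons, walkLen_cons]
            refine add_le_add (hlb _ _ h) (add_le_add (hlb _ _ h') ?_)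
            exact le_trans (hlb _ _ h'') le_self_add
          rw [walkLen_cons, walkLen_cons, walkLen_cons] at hge
          have h6 : ENNReal.ofReal (6 * n) = ENNReal.ofReal (2 * n) +
              (ENNReal.ofReal (2 * n) + ENNReal.ofReal (2 * n)) := by
            rw [← ENNReal.ofReal_add (by positivity) (by positivity),
              ← ENNReal.ofReal_add (by positivity) (by positivity)]
            congr 1
            ring
          have hlt6 : ENNReal.ofReal (4 * n + 2 * D + 1) ≤ ENNReal.ofReal (6 * n) := by
            apply ENNReal.ofReal_le_ofReal
            have hDr : (D : ℝ) ≤ (n : ℝ) - 1 := by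
              have h2 : 1 ≤ n := by omega
              have h3 := (Nat.cast_le (α := ℝ)).mpr hDn
              rw [Nat.cast_sub h2] at h3
              simpa using h3
            linarith
          rw [h6] at hlt6
          exact absurd (lt_of_lt_of_le hplen hlt6) (not_lt.mpr hge)
  exact key _ _ p hp rfl rfl

/-- There is a constant `c > 0` such that for every `n ≥ 2`,
every oblivious `(1/3)`-reliable `2`-spanner for the comb metric on `2n` points
with parameter `M = n` has a graph with at least `c·n·log₂ n` edges in its
support. -/
theorem oblivious_reliable_two_spanner_lower_bound :
    ∃ c : ℝ, 0 < c ∧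
      ∀ n : ℕ, 2 ≤ n →
      ∀ μ : SimpleGraph (Fin n ⊕ Fin n) → ℝ,
        IsObliviousReliableTwoSpanner (combD n) (1 / 3) μ →
        ∃ G, μ G ≠ 0 ∧ c * n * Real.logb 2 n ≤ (G.edgeSet.ncard : ℝ) := by
  classical
  refine ⟨1 / 8192, by norm_num, ?_⟩
  intro n hn μ hμ
  obtain ⟨hpos, hfin, hsum1, hatt⟩ := hμ
  set B : Set (Fin n ⊕ Fin n) := Set.range Sum.inl with hB
  obtain ⟨Bp, hBp_sub, hBp_exp, hBp_span⟩ := hatt B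
  have hBcard : B.ncard = n := by
    rw [hB, ← Set.image_univ, Set.ncard_image_of_injective _ Sum.inl_injective,
      Set.ncard_univ, Nat.card_eq_fintype_card, Fintype.card_fin]
  -- find a good graph in the support
  have hgood : ∃ G, μ G ≠ 0 ∧ 3 * (Bp G).ncard ≤ 4 * n := by
    by_contra hcon
    push_neg at hcon
    set s : Finset (SimpleGraph (Fin n ⊕ Fin n)) := hfin.toFinset with hs
    have hsupp : Function.support μ ⊆ ↑s := by
      intro G hG
      rw [hs, Set.Finite.coe_toFinset]
      exact hG
    have hsum1' : ∑ G ∈ s, μ G = 1 := by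
      rw [← finsum_eq_sum_of_support_subset μ hsupp, hsum1]
    have hsupp2 : Function.support (fun G => μ G * ((Bp G).ncard : ℝ)) ⊆ ↑s := by
      intro G hG
      apply hsupp
      intro h0
      apply hG
      show μ G * ((Bp G).ncard : ℝ) = 0
      rw [h0, zero_mul]
    have hexp' : ∑ G ∈ s, μ G * ((Bp G).ncard : ℝ) ≤ (1 + 1 / 3) * n := by
      rw [← finsum_eq_sum_of_support_subset _ hsupp2]
      calc _ ≤ (1 + 1 / 3) * (B.ncard : ℝ) := hBp_exp
        _ = (1 + 1 / 3) * n := by rw [hBcard]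
    have hlow : ∀ G ∈ s, μ G * ((4 * n + 1 : ℕ) : ℝ) / 3 ≤ μ G * ((Bp G).ncard : ℝ) := by
      intro G hG
      rw [hs, Set.Finite.mem_toFinset] at hG
      have h1 : 4 * n < 3 * (Bp G).ncard := hcon G hG
      have h2 : ((4 * n + 1 : ℕ) : ℝ) / 3 ≤ ((Bp G).ncard : ℝ) := by
        rw [div_le_iff₀ (by norm_num)]
        have : (4 * n + 1 : ℕ) ≤ 3 * (Bp G).ncard := by omega
        calc ((4 * n + 1 : ℕ) : ℝ) ≤ ((3 * (Bp G).ncard : ℕ) : ℝ) := Nat.cast_le.mpr this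
          _ = ((Bp G).ncard : ℝ) * 3 := by push_cast; ring
      have h3 : 0 ≤ μ G := hpos G
      calc μ G * ((4 * n + 1 : ℕ) : ℝ) / 3 = μ G * (((4 * n + 1 : ℕ) : ℝ) / 3) := by ring
        _ ≤ μ G * ((Bp G).ncard : ℝ) := mul_le_mul_of_nonneg_left h2 h3
    have h4 : ((4 * n + 1 : ℕ) : ℝ) / 3 ≤ (1 + 1 / 3) * n := by
      calc ((4 * n + 1 : ℕ) : ℝ) / 3 = ∑ G ∈ s, μ G * ((4 * n + 1 : ℕ) : ℝ) / 3 := by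
            rw [← Finset.sum_div, ← Finset.sum_mul, hsum1', one_mul]
        _ ≤ ∑ G ∈ s, μ G * ((Bp G).ncard : ℝ) := Finset.sum_le_sum hlow
        _ ≤ (1 + 1 / 3) * n := hexp'
    push_cast at h4
    linarith
  obtain ⟨G, hGne, hGcard⟩ := hgood
  refine ⟨G, hGne, ?_⟩
  -- surviving leaves
  set F1 : Finset (Fin n) := Finset.univ.filter (fun i => Sum.inr i ∉ Bp G) with hF1
  have h2n3 : 2 * n ≤ 3 * F1.card := by
    set F2 : Finset (Fin n) := Finset.univ.filter (fun i => Sum.inr i ∈ Bp G) with hF2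
    have hcards : F1.card + F2.card = n := by
      have h0 : (Finset.univ.filter (fun i : Fin n => Sum.inr i ∉ Bp G)).card
          + (Finset.univ.filter (fun i : Fin n => ¬ (Sum.inr i ∉ Bp G))).card
          = (Finset.univ : Finset (Fin n)).card :=
        Finset.card_filter_add_card_filter_not _
      rw [Finset.card_univ, Fintype.card_fin] at h0
      have he : (Finset.univ.filter (fun i : Fin n => ¬ (Sum.inr i ∉ Bp G))).card
          = F2.card := by
        congr 1
        apply Finset.ext
        intro a
        rw [hF2]
        simp [not_not]
      rw [hF1, hF2]
      rw [hF2] at he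
      omega
    have hBpbig : n + F2.card ≤ (Bp G).ncard := by
      set T : Finset (Fin n ⊕ Fin n) :=
        (Finset.univ.image (Sum.inl : Fin n → Fin n ⊕ Fin n)) ∪
          (F2.image (Sum.inr : Fin n → Fin n ⊕ Fin n)) with hT
      have hTcard : T.card = n + F2.card := by
        rw [hT, Finset.card_union_of_disjoint]
        · rw [Finset.card_image_of_injective _ Sum.inl_injective,
            Finset.card_image_of_injective _ Sum.inr_injective,
            Finset.card_univ, Fintype.card_fin]
        · rw [Finset.disjoint_left]
          rintro x hx hy
          rw [Finset.mem_image] at hx hy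
          obtain ⟨a, -, rfl⟩ := hx
          obtain ⟨b, -, hb⟩ := hy
          simp at hb
      have hTsub : ↑T ⊆ Bp G := by
        intro x hx
        rw [hT] at hx
        simp only [Finset.coe_union, Set.mem_union, Finset.coe_image, Set.mem_image,
          Finset.mem_coe] at hx
        rcases hx with ⟨a, -, rfl⟩ | ⟨a, ha, rfl⟩
        · exact hBp_sub G (Set.mem_range_self a)
        · rw [hF2, Finset.mem_filter] at ha
          exact ha.2
      calc n + F2.card = T.card := hTcard.symm
        _ = (↑T : Set (Fin n ⊕ Fin n)).ncard := (Set.ncard_coe_finset T).symm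
        _ ≤ (Bp G).ncard := Set.ncard_le_ncard hTsub (Set.toFinite _)
    omega
  -- the leaf adjacency relation on ℕ
  set L : ℕ → ℕ → Prop := fun a b => ∃ (ha : a < n) (hb : b < n),
    G.Adj (Sum.inr ⟨a, ha⟩) (Sum.inr ⟨b, hb⟩) with hLdef
  haveI : DecidableRel L := fun a b => Classical.dec _
  have hL : ∀ a b, L a b → a < n ∧ b < n ∧ a ≠ b := by
    rintro a b ⟨ha, hb, hadj⟩
    refine ⟨ha, hb, ?_⟩
    intro e
    subst e
    exact hadj.ne rfl
  have hLs : ∀ a b, L a b → L b a := by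
    rintro a b ⟨ha, hb, hadj⟩
    exact ⟨hb, ha, hadj.symm⟩
  have hLadj : ∀ (i j : Fin n), G.Adj (Sum.inr i) (Sum.inr j) → L i.val j.val := by
    intro i j hadj
    exact ⟨i.isLt, j.isLt, by simpa using hadj⟩
  set Svn : Finset ℕ := F1.image Fin.val with hSvn
  have hSvncard : Svn.card = F1.card := Finset.card_image_of_injective _ Fin.val_injective
  have hSvnsub : Svn ⊆ Finset.range n := by
    intro a ha
    rw [hSvn, Finset.mem_image] at ha
    obtain ⟨i, -, rfl⟩ := ha
    exact Finset.mem_range.mpr i.isLt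
  have hSvn23 : 2 * n ≤ 3 * Svn.card := by rw [hSvncard]; exact h2n3
  -- the 2-hop condition
  have hcon : ∀ a ∈ Svn, ∀ b ∈ Svn, a < b →
      L a b ∨ ∃ c, L a c ∧ L c b ∧ Nat.dist a c + Nat.dist c b ≤ 2 * (b - a) := by
    intro a ha b hb hab
    rw [hSvn, Finset.mem_image] at ha hb
    obtain ⟨i, hiF, rfl⟩ := ha
    obtain ⟨j, hjF, rfl⟩ := hb
    have hij : i ≠ j := by
      intro e; subst e; omega
    rw [hF1, Finset.mem_filter] at hiF hjF
    have hgd := hBp_span G hGne ⟨Sum.inr i, inr_mem_Bc i⟩ ⟨Sum.inr j, inr_mem_Bc j⟩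
      hiF.2 hjF.2
    have hws := walk_structure hn G i j hij hgd
    have hdij : Nat.dist i.val j.val = j.val - i.val := Nat.dist_eq_sub_of_le hab.le
    rcases hws with hd | ⟨c, h1, h2, h3⟩
    · exact Or.inl (hLadj i j hd)
    · exact Or.inr ⟨c.val, hLadj i c h1, hLadj c j h2, by rw [← hdij]; exact h3⟩
  -- the global pair finset
  set Pe : Finset (ℕ × ℕ) := (Finset.range n ×ˢ Finset.range n).filter
    (fun e => e.1 < e.2 ∧ L e.1 e.2) with hPe
  -- edge count lower bound via scales
  set K : ℕ := Nat.log 2 n - 4 with hK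
  have hscales : K * n ≤ 432 * Pe.card := by
    apply scales_sum
    intro k hk
    apply core_scale n (2 ^ k) L hL hLs Svn hSvnsub hSvn23 hcon (Nat.pow_pos
      (by norm_num) )
    -- 18 * 2^k ≤ n
    have h1 : k + 5 ≤ Nat.log 2 n := by omega
    have h2 : 2 ^ (k + 5) ≤ n := (Nat.le_log_iff_pow_le (by norm_num) (by omega)).mp h1
    have h3 : 18 * 2 ^ k ≤ 32 * 2 ^ k := by
      have : 0 < 2 ^ k := Nat.pow_pos (show 0 < 2 by norm_num)
      nlinarith
    calc 18 * 2 ^ k ≤ 32 * 2 ^ k := h3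
      _ = 2 ^ (k + 5) := by ring
      _ ≤ n := h2
  -- Pe is nonempty
  have hPe1 : 1 ≤ Pe.card := by
    have hcard2 : 1 < Svn.card := by omega
    obtain ⟨a, haS, b, hbS, hab⟩ := Finset.one_lt_card.mp hcard2
    have hedge : ∃ u v, L u v := by
      rcases Nat.lt_or_ge a b with h | h
      · rcases hcon a haS b hbS h with hd | ⟨c, h1, -, -⟩
        · exact ⟨a, b, hd⟩
        · exact ⟨a, c, h1⟩
      · have h' : b < a := by omega
        rcases hcon b hbS a haS h' with hd | ⟨c, h1, -, -⟩
        · exact ⟨b, a, hd⟩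
        · exact ⟨b, c, h1⟩
    obtain ⟨u, v, huv⟩ := hedge
    obtain ⟨hu, hv, hne⟩ := hL u v huv
    have hmm : (min u v, max u v) ∈ Pe := by
      rw [hPe, Finset.mem_filter, Finset.mem_product]
      refine ⟨⟨?_, ?_⟩, ?_, ?_⟩
      · rw [Finset.mem_range]; show min u v < n; omega
      · rw [Finset.mem_range]; show max u v < n; omega
      · show min u v < max u v; omega
      · show L (min u v) (max u v)
        rcases Nat.le_total u v with h | h
        · rw [min_eq_left h, max_eq_right h]; exact huv
        · rw [min_eq_right h, max_eq_left h]; exact hLs u v huv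
    exact Finset.card_pos.mpr ⟨_, hmm⟩
  -- injection from Pe into the edge set
  have hedgecard : Pe.card ≤ G.edgeSet.ncard := by
    have hnpos : 0 < n := by omega
    set g : ℕ × ℕ → Sym2 (Fin n ⊕ Fin n) := fun p =>
      s(Sum.inr ⟨p.1 % n, Nat.mod_lt _ hnpos⟩, Sum.inr ⟨p.2 % n, Nat.mod_lt _ hnpos⟩)
      with hg
    have hmem : ∀ p ∈ Pe, g p ∈ G.edgeSet := by
      rintro ⟨u, v⟩ hp
      rw [hPe, Finset.mem_filter, Finset.mem_product, Finset.mem_range, Finset.mem_range] at hp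
      obtain ⟨⟨hu, hv⟩, -, hLuv⟩ := hp
      obtain ⟨hu', hv', hadj⟩ := hLuv
      rw [hg, SimpleGraph.mem_edgeSet]
      have e1 : (⟨u % n, Nat.mod_lt _ hnpos⟩ : Fin n) = ⟨u, hu'⟩ := by
        apply Fin.ext
        simp [Nat.mod_eq_of_lt hu']
      have e2 : (⟨v % n, Nat.mod_lt _ hnpos⟩ : Fin n) = ⟨v, hv'⟩ := by
        apply Fin.ext
        simp [Nat.mod_eq_of_lt hv']
      rw [e1, e2]
      exact hadj
    have hinj : Set.InjOn g ↑Pe := by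
      rintro ⟨u, v⟩ hp ⟨u', v'⟩ hp' he
      rw [Finset.mem_coe, hPe, Finset.mem_filter, Finset.mem_product,
        Finset.mem_range, Finset.mem_range] at hp hp'
      dsimp only at hp hp'
      obtain ⟨⟨hu, hv⟩, huv, -⟩ := hp
      obtain ⟨⟨hu', hv'⟩, huv', -⟩ := hp'
      rw [hg, Sym2.eq_iff] at he
      have hmu := Nat.mod_eq_of_lt hu
      have hmv := Nat.mod_eq_of_lt hv
      have hmu' := Nat.mod_eq_of_lt hu'
      have hmv' := Nat.mod_eq_of_lt hv'
      rcases he with ⟨e1, e2⟩ | ⟨e1, e2⟩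
      · have c1 : u % n = u' % n := by simpa using e1
        have c2 : v % n = v' % n := by simpa using e2
        rw [Prod.mk.injEq]
        omega
      · have c1 : u % n = v' % n := by simpa using e1
        have c2 : v % n = u' % n := by simpa using e2
        rw [Prod.mk.injEq]
        omega
    calc Pe.card = (Pe.image g).card := (Finset.card_image_of_injOn hinj).symm
      _ = ((↑(Pe.image g)) : Set (Sym2 (Fin n ⊕ Fin n))).ncard :=
          (Set.ncard_coe_finset _).symm
      _ ≤ G.edgeSet.ncard := by
          apply Set.ncard_le_ncard _ (Set.toFinite _)
          intro e he
          rw [Finset.coe_image] at he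
          obtain ⟨p, hp, rfl⟩ := he
          exact hmem p hp
  -- final numeric assembly
  have hcastE : (Pe.card : ℝ) ≤ (G.edgeSet.ncard : ℝ) := Nat.cast_le.mpr hedgecard
  rcases Nat.lt_or_ge n 512 with hsmall | hlarge
  · -- small case : c n log n < 1 ≤ edges
    have hlogb : Real.logb 2 n ≤ 9 := by
      have h1 : (n : ℝ) ≤ 512 := by exact_mod_cast Nat.le_of_lt_succ (by omega)
      have h2 : Real.logb 2 (n : ℝ) ≤ Real.logb 2 512 := by
        rw [Real.logb_le_logb (by norm_num) (by positivity) (by norm_num)]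
        exact h1
      have h3 : Real.logb 2 (512 : ℝ) = 9 := by
        rw [show (512 : ℝ) = 2 ^ (9 : ℕ) by norm_num, Real.logb_pow,
          Real.logb_self_eq_one (by norm_num)]
        norm_num
      linarith
    have hlogbnn : 0 ≤ Real.logb 2 n := by
      apply Real.logb_nonneg (by norm_num)
      exact_mod_cast by omega
    have hnr : (n : ℝ) ≤ 511 := by exact_mod_cast by omega
    have h1 : (1 : ℝ) ≤ (Pe.card : ℝ) := by exact_mod_cast hPe1
    calc (1 / 8192 : ℝ) * n * Real.logb 2 n ≤ (1 / 8192 : ℝ) * 511 * 9 := by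
          apply mul_le_mul _ hlogb hlogbnn (by norm_num)
          apply mul_le_mul_of_nonneg_left hnr (by norm_num)
      _ ≤ 1 := by norm_num
      _ ≤ (Pe.card : ℝ) := h1
      _ ≤ _ := hcastE
  · -- large case
    set l : ℕ := Nat.log 2 n with hl
    have hl9 : 9 ≤ l := by
      have : 2 ^ 9 ≤ n := by omega
      exact (Nat.le_log_iff_pow_le (by norm_num) (by omega)).mpr this
    have hKeq : K = l - 4 := rfl
    have hlogb : Real.logb 2 n ≤ (l : ℝ) + 1 := by
      have h1 : n < 2 ^ (l + 1) := Nat.lt_pow_succ_log_self (by norm_num) n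
      have h2 : (n : ℝ) ≤ (2 : ℝ) ^ (l + 1) := by
        have := (Nat.cast_le (α := ℝ)).mpr h1.le
        push_cast at this
        exact this
      have h3 : Real.logb 2 (n : ℝ) ≤ Real.logb 2 ((2 : ℝ) ^ (l + 1)) := by
        rw [Real.logb_le_logb (by norm_num) (by positivity) (by positivity)]
        exact h2
      rw [Real.logb_pow, Real.logb_self_eq_one (by norm_num)] at h3
      push_cast at h3
      linarith
    have hKn : ((K * n : ℕ) : ℝ) ≤ ((432 * Pe.card : ℕ) : ℝ) := Nat.cast_le.mpr hscales
    push_cast at hKn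
    have hKr : (K : ℝ) = (l : ℝ) - 4 := by
      rw [hKeq]
      push_cast [Nat.cast_sub (by omega : 4 ≤ l)]
      ring
    rw [hKr] at hKn
    have hnr : (0 : ℝ) ≤ n := Nat.cast_nonneg n
    have hlr : (9 : ℝ) ≤ (l : ℝ) := by exact_mod_cast hl9
    have hlogbnn : 0 ≤ Real.logb 2 n := by
      apply Real.logb_nonneg (by norm_num)
      exact_mod_cast by omega
    calc (1 / 8192 : ℝ) * n * Real.logb 2 n ≤ (1 / 8192 : ℝ) * n * ((l : ℝ) + 1) := by
          apply mul_le_mul_of_nonneg_left hlogb (by positivity)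
      _ ≤ (Pe.card : ℝ) := by nlinarith
      _ ≤ _ := hcastE
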